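/- Let G be a connected Lie group and H a closed subgroup. If D is a fundamental domain for a discrete subgroup Γ₁ ≤ G₁ and E is a fundamental domain for a discrete subgroup Γ₂ ≤ G₂, and Γ ≤ G₁ × G₂ is a discrete subgroup such that Γ ∩ G₁ = Γ₁ and the projection of Γ to G₂ equals Γ₂, and moreover every element of Γ₂ lifts to an element of Γ, then D × E is a fundamental domain for Γ in G₁ × G₂. -/

import Mathlib

/-!
A set `D` meets every coset `gH` exactly once iff it meets every coset and no two of its points
differ by a nontrivial element of `H`. For `D ×ˢ E` and `Γ`, a point of the coset of `(g₁, g₂)`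
is found by first moving `g₂` into `E` with a lift of an element of `Γ₂`, then correcting the first
coordinate inside `D` by an element of `Γ₁ × 1 ≤ Γ`. Conversely, if `x` and `xγ` both lie in
`D ×ˢ E`, then `γ.2 ∈ Γ₂` must be trivial, so `γ ∈ Γ ∩ (G₁ × 1) = Γ₁`, and `γ.1` is trivial too.
-/

namespace Subgroup

theorem existsUnique_mul_mem_iff {G : Type*} [Group G] (H : Subgroup G) (D : Set G) :
    (∀ g : G, ∃! γ : H, g * (γ : G) ∈ D) ↔
      (∀ g : G, ∃ γ ∈ H, g * γ ∈ D) ∧ ∀ x ∈ D, ∀ γ ∈ H, x * γ ∈ D → γ = 1 := by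
  constructor
  · intro h
    refine ⟨fun g => ?_, fun x hx γ hγ hxγ => ?_⟩
    · obtain ⟨γ, hγ, -⟩ := h g
      exact ⟨γ, γ.2, hγ⟩
    · have := (h x).unique (y₁ := ⟨γ, hγ⟩) (y₂ := 1) hxγ (by simpa using hx)
      simpa using congrArg Subtype.val this
  · rintro ⟨hex, hone⟩ g
    obtain ⟨γ, hγ, hgγ⟩ := hex g
    refine ⟨⟨γ, hγ⟩, hgγ, fun γ' hgγ' => ?_⟩
    have : γ⁻¹ * γ' = 1 :=
      hone _ hgγ _ (H.mul_mem (H.inv_mem hγ) γ'.2) (by simpa [← mul_assoc] using hgγ')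
    ext
    simpa [inv_mul_eq_one, eq_comm] using this

variable {G₁ G₂ : Type*} [Group G₁] [Group G₂] (Γ : Subgroup (G₁ × G₂))
  {Γ₁ : Subgroup G₁} {Γ₂ : Subgroup G₂} {D : Set G₁} {E : Set G₂}

theorem exists_mul_mem_prod (hΓ₁ : Γ₁ ≤ Γ.comap (MonoidHom.inl G₁ G₂))
    (hΓ₂ : Γ₂ ≤ Γ.map (MonoidHom.snd G₁ G₂))
    (hD : ∀ g : G₁, ∃ γ ∈ Γ₁, g * γ ∈ D) (hE : ∀ g : G₂, ∃ γ ∈ Γ₂, g * γ ∈ E)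
    (g : G₁ × G₂) : ∃ γ ∈ Γ, g * γ ∈ D ×ˢ E := by
  obtain ⟨γ₂, hγ₂, hg₂⟩ := hE g.2
  obtain ⟨δ, hδ, rfl⟩ := hΓ₂ hγ₂
  obtain ⟨γ₁, hγ₁, hg₁⟩ := hD (g.1 * δ.1)
  refine ⟨δ * (γ₁, 1), Γ.mul_mem hδ (hΓ₁ hγ₁), ?_, ?_⟩
  · simpa [mul_assoc] using hg₁
  · simpa using hg₂

theorem eq_one_of_mul_mem_prod (hΓ₁ : Γ.comap (MonoidHom.inl G₁ G₂) ≤ Γ₁)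
    (hΓ₂ : Γ.map (MonoidHom.snd G₁ G₂) ≤ Γ₂)
    (hD : ∀ x ∈ D, ∀ γ ∈ Γ₁, x * γ ∈ D → γ = 1) (hE : ∀ x ∈ E, ∀ γ ∈ Γ₂, x * γ ∈ E → γ = 1)
    {x : G₁ × G₂} (hx : x ∈ D ×ˢ E) {γ : G₁ × G₂} (hγ : γ ∈ Γ) (hxγ : x * γ ∈ D ×ˢ E) :
    γ = 1 := by
  have hγ₂ : γ.2 = 1 := hE _ hx.2 _ (hΓ₂ ⟨γ, hγ, rfl⟩) hxγ.2
  have hγ₁ : γ.1 ∈ Γ₁ := hΓ₁ (show (γ.1, (1 : G₂)) ∈ Γ by rwa [← hγ₂])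
  exact Prod.ext (hD _ hx.1 _ hγ₁ hxγ.1) hγ₂

end Subgroup

theorem prod_fundamentalDomain_general
    {G₁ G₂ : Type*} [Group G₁] [Group G₂]
    [MeasurableSpace G₁] [MeasurableSpace G₂]
    (Γ : Subgroup (G₁ × G₂))
    (Γ₁ : Subgroup G₁) (hΓ₁ : Γ₁ = Γ.comap (MonoidHom.inl G₁ G₂))
    (Γ₂ : Subgroup G₂) (hΓ₂ : Γ₂ = Γ.map (MonoidHom.snd G₁ G₂))
    (D : Set G₁) (hDmeas : MeasurableSet D) (hD : ∀ g : G₁, ∃! γ : Γ₁, g * (γ : G₁) ∈ D)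
    (E : Set G₂) (hEmeas : MeasurableSet E) (hE : ∀ g : G₂, ∃! γ : Γ₂, g * (γ : G₂) ∈ E) :
    MeasurableSet (D ×ˢ E) ∧
      ∀ g : G₁ × G₂, ∃! γ : Γ, g * (γ : G₁ × G₂) ∈ D ×ˢ E := by
  rw [Subgroup.existsUnique_mul_mem_iff] at hD hE ⊢
  exact ⟨hDmeas.prod hEmeas,
    Γ.exists_mul_mem_prod hΓ₁.le hΓ₂.le hD.1 hE.1,
    fun _ hx _ hγ hxγ => Γ.eq_one_of_mul_mem_prod hΓ₁.ge hΓ₂.ge hD.2 hE.2 hx hγ hxγ⟩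

/-- If `D` is a fundamental domain (a measurable set meeting each coset `gΓ₁`
exactly once) for a discrete subgroup `Γ₁ ≤ G₁`, `E` is a fundamental domain
for a discrete subgroup `Γ₂ ≤ G₂`, and `Γ ≤ G₁ × G₂` is a discrete subgroup
with `Γ ∩ (G₁ × 1) = Γ₁` and `π₂(Γ) = Γ₂` (so every element of `Γ₂` lifts to
`Γ`), then `D × E` is a fundamental domain for `Γ` in `G₁ × G₂`. -/
theorem prod_fundamentalDomain
    {G₁ G₂ : Type*} [Group G₁] [Group G₂]
    [TopologicalSpace G₁] [IsTopologicalGroup G₁]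
    [TopologicalSpace G₂] [IsTopologicalGroup G₂]
    [MeasurableSpace G₁] [BorelSpace G₁] [MeasurableSpace G₂] [BorelSpace G₂]
    (Γ : Subgroup (G₁ × G₂)) [DiscreteTopology Γ]
    (Γ₁ : Subgroup G₁) [DiscreteTopology Γ₁] (hΓ₁ : Γ₁ = Γ.comap (MonoidHom.inl G₁ G₂))
    (Γ₂ : Subgroup G₂) [DiscreteTopology Γ₂] (hΓ₂ : Γ₂ = Γ.map (MonoidHom.snd G₁ G₂))
    (D : Set G₁) (hDmeas : MeasurableSet D) (hD : ∀ g : G₁, ∃! γ : Γ₁, g * (γ : G₁) ∈ D)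
    (E : Set G₂) (hEmeas : MeasurableSet E) (hE : ∀ g : G₂, ∃! γ : Γ₂, g * (γ : G₂) ∈ E) :
    MeasurableSet (D ×ˢ E) ∧
      ∀ g : G₁ × G₂, ∃! γ : Γ, g * (γ : G₁ × G₂) ∈ D ×ˢ E :=
  prod_fundamentalDomain_general Γ Γ₁ hΓ₁ Γ₂ hΓ₂ D hDmeas hD E hEmeas hE
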